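/- Every nil-polynomial is uniquely determined by its quadratic and cubic terms: if P and P̃ are nil-polynomials on the same space W (arising from possibly different admissible algebras) with P^{[2]} = P̃^{[2]} and P^{[3]} = P̃^{[3]}, then P = P̃. -/

import Mathlib

open Finset

/-- Annihilator `Ann(N) = {u ∈ N : uN = 0}` of a non-unital commutative ℂ-algebra. -/
def annN (N : Type*) [NonUnitalCommRing N] [Module ℂ N] [IsScalarTower ℂ N N] :
    Submodule ℂ N where
  carrier := {u | ∀ v : N, u * v = 0}
  add_mem' := fun ha hb v => by rw [add_mul, ha v, hb v, add_zero]
  zero_mem' := fun v => zero_mul v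
  smul_mem' := fun c a ha v => by rw [smul_mul_assoc, ha v, smul_zero]

/-- The descending chain of ideals: `npow N j` is `N^j` for `j ≥ 1`
(`N^1 = N`, `N^{j+1} = span(N·N^j)`; `npow N 0 := ⊤` by convention). -/
def npow (N : Type*) [NonUnitalCommRing N] [Module ℂ N] : ℕ → Submodule ℂ N
  | 0 => ⊤
  | 1 => ⊤
  | (j+2) => Submodule.span ℂ {x : N | ∃ u : N, ∃ v ∈ npow N (j+1), x = u * v}

/-- Powers `u^m` of an element in a non-unital commutative ring
(`upow u 0 := 0` by convention; only `m ≥ 1` is used). -/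
def upow {N : Type*} [NonUnitalCommRing N] (u : N) : ℕ → N
  | 0 => 0
  | 1 => u
  | (m+2) => u * upow u (m+1)

/-!
Polarization turns the quadratic and cubic terms into the bilinear form `B(x, y) = ω(φx φy)` and
the trilinear form `T(x, y, z) = ω(φx φy φz)` on `W`, so both are shared by the two algebras.
Since `N = φ(W) ⊕ Ann(N)` and `Ann(N)` is killed by multiplication, `φx^(m+1)` acts on `N` as
some `φ w`; then `B(w', z) = ω(φx^(m+2) φz) = T(x, w, z)` for the next `w'`, and `B` is
nondegenerate because every nonzero ideal of a nilpotent algebra meets the line `Ann(N)`, on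
which `ω` does not vanish. By induction the same `w` serves both algebras, hence
`ω(φx^(m+2)) = B(w, x)` agrees for all `m`.
-/

theorem upow_succ_succ {N : Type*} [NonUnitalCommRing N] (u : N) (m : ℕ) :
    upow u (m + 2) = u * upow u (m + 1) := rfl

section Nilpotent

variable {N : Type*} [NonUnitalCommRing N] [Module ℂ N]

theorem mem_annN [IsScalarTower ℂ N N] {u : N} : u ∈ annN N ↔ ∀ v, u * v = 0 := Iff.rfl

theorem mul_mem_npow_succ (u : N) {v : N} {j : ℕ} (hv : v ∈ npow N j) :
    u * v ∈ npow N (j + 1) := by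
  match j with
  | 0 => exact Submodule.mem_top
  | k + 1 => exact Submodule.subset_span ⟨u, v, hv, rfl⟩

theorem upow_mem_npow (u : N) (m : ℕ) : upow u (m + 1) ∈ npow N (m + 1) := by
  induction m with
  | zero => exact Submodule.mem_top
  | succ k ih => exact mul_mem_npow_succ u ih

theorem upow_eq_zero_of_lt {ν : ℕ} (hnil : npow N (ν + 1) = ⊥) (u : N) {ℓ : ℕ} (hℓ : ν < ℓ) :
    upow u ℓ = 0 := by
  induction ℓ, hℓ using Nat.le_induction with
  | base => simpa [hnil] using upow_mem_npow u ν
  | succ k hk ih =>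
    obtain ⟨k, rfl⟩ : ∃ j, k = j + 1 := ⟨k - 1, by omega⟩
    rw [upow_succ_succ, ih, mul_zero]

theorem exists_mul_ne_zero_mul_mem_annN [IsScalarTower ℂ N N] {ν : ℕ}
    (hnil : npow N (ν + 1) = ⊥) {u v : N} (huv : u * v ≠ 0) :
    ∃ w, u * w ≠ 0 ∧ u * w ∈ annN N := by
  -- multiply `v` further until `u * v` is killed by everything; nilpotency bounds the steps
  suffices ∀ d j, j + d = ν + 1 → ∀ v ∈ npow N j, u * v ≠ 0 → ∃ w, u * w ≠ 0 ∧ u * w ∈ annN N from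
    this (ν + 1) 0 (zero_add _) v Submodule.mem_top huv
  intro d
  induction d with
  | zero =>
    rintro j rfl v hv huv
    rw [hnil, Submodule.mem_bot] at hv
    exact absurd (by rw [hv, mul_zero]) huv
  | succ d ih =>
    intro j hj v hv huv
    by_cases hann : u * v ∈ annN N
    · exact ⟨v, huv, hann⟩
    obtain ⟨z, hz⟩ : ∃ z, u * v * z ≠ 0 := by simpa [mem_annN] using hann
    refine ih (j + 1) (by omega) (v * z) ?_ (by rwa [← mul_assoc])
    simpa only [mul_comm z v] using mul_mem_npow_succ z hv

theorem eq_zero_of_mem_annN_of_map_eq_zero [IsScalarTower ℂ N N]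
    (hann : Module.finrank ℂ (annN N) = 1) {ω : N →ₗ[ℂ] ℂ} {a : N} (ha : a ∈ annN N)
    (hωa : ω a ≠ 0) {b : N} (hb : b ∈ annN N) (hωb : ω b = 0) : b = 0 := by
  have ha0 : (⟨a, ha⟩ : annN N) ≠ 0 := fun h ↦
    hωa (by simp [show a = 0 from congrArg Subtype.val h])
  obtain ⟨c, hc⟩ := (finrank_eq_one_iff_of_nonzero' _ ha0).mp hann ⟨b, hb⟩
  have hb : b = c • a := by simpa [Subtype.ext_iff] using hc.symm
  rw [hb, map_smul, smul_eq_mul, mul_eq_zero] at hωb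
  rw [hb, hωb.resolve_right hωa, zero_smul]

theorem eq_zero_of_map_mul_eq_zero [IsScalarTower ℂ N N] {ν : ℕ}
    (hnil : npow N (ν + 1) = ⊥) (hann : Module.finrank ℂ (annN N) = 1)
    {ω : N →ₗ[ℂ] ℂ} {a : N} (ha : a ∈ annN N) (hωa : ω a ≠ 0) {u : N} (hu : ω u = 0)
    (hmul : ∀ v, ω (u * v) = 0) : u = 0 := by
  refine eq_zero_of_mem_annN_of_map_eq_zero hann ha hωa ?_ hu
  by_contra hu'
  obtain ⟨v, hv⟩ : ∃ v, u * v ≠ 0 := by simpa [mem_annN] using hu'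
  obtain ⟨w, hw, hwann⟩ := exists_mul_ne_zero_mul_mem_annN hnil hv
  exact hw (eq_zero_of_mem_annN_of_map_eq_zero hann ha hωa hwann (hmul w))

end Nilpotent

section Polarization

variable {N : Type*} [NonUnitalCommRing N]

theorem two_nsmul_mul_eq_upow_two (s t : N) :
    2 • (s * t) = upow (s + t) 2 - upow s 2 - upow t 2 := by
  simp only [upow, add_mul, mul_add, mul_comm t s]
  abel

theorem six_nsmul_mul_mul_eq_upow_three (s t u : N) :
    6 • (s * (t * u)) = upow (s + t + u) 3 - upow (s + t) 3 - upow (s + u) 3 - upow (t + u) 3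
      + upow s 3 + upow t 3 + upow u 3 := by
  simp only [upow, add_mul, mul_add]
  simp only [mul_comm, mul_left_comm]
  abel

variable {W N' : Type*} [AddCommGroup W] [Module ℂ W] [Module ℂ N] [NonUnitalCommRing N']
  [Module ℂ N'] {ω : N →ₗ[ℂ] ℂ} {φ : W →ₗ[ℂ] N} {ω' : N' →ₗ[ℂ] ℂ} {φ' : W →ₗ[ℂ] N'}

theorem map_mul_eq_of_map_upow_two_eq (h2 : ∀ x, ω (upow (φ x) 2) = ω' (upow (φ' x) 2))
    (x y : W) : ω (φ x * φ y) = ω' (φ' x * φ' y) := by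
  have e := two_nsmul_mul_eq_upow_two (φ x) (φ y)
  have e' := two_nsmul_mul_eq_upow_two (φ' x) (φ' y)
  rw [← map_add] at e e'
  replace e := congrArg ω e
  replace e' := congrArg ω' e'
  simp only [map_nsmul, map_sub, h2, nsmul_eq_mul] at e e'
  linear_combination (e - e') / 2

theorem map_mul_mul_eq_of_map_upow_three_eq (h3 : ∀ x, ω (upow (φ x) 3) = ω' (upow (φ' x) 3))
    (x y z : W) : ω (φ x * (φ y * φ z)) = ω' (φ' x * (φ' y * φ' z)) := by
  have e := six_nsmul_mul_mul_eq_upow_three (φ x) (φ y) (φ z)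
  have e' := six_nsmul_mul_mul_eq_upow_three (φ' x) (φ' y) (φ' z)
  rw [← map_add φ x y, ← map_add φ (x + y), ← map_add φ x z, ← map_add φ y z] at e
  rw [← map_add φ' x y, ← map_add φ' (x + y), ← map_add φ' x z, ← map_add φ' y z] at e'
  replace e := congrArg ω e
  replace e' := congrArg ω' e'
  simp only [map_nsmul, map_sub, map_add ω, h3, nsmul_eq_mul] at e
  simp only [map_nsmul, map_sub, map_add ω', nsmul_eq_mul] at e'
  linear_combination (e - e') / 6

end Polarization

section Lift

variable {W N : Type*} [AddCommGroup W] [Module ℂ W] [NonUnitalCommRing N] [Module ℂ N]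
  [IsScalarTower ℂ N N] {ω : N →ₗ[ℂ] ℂ} {φ : W →ₗ[ℂ] N} {a : N}

theorem exists_forall_mul_eq (ha : a ∈ annN N) (hωa : ω a ≠ 0)
    (hker : LinearMap.ker ω ≤ LinearMap.range φ) (u : N) : ∃ w, ∀ v, φ w * v = u * v := by
  obtain ⟨w, hw⟩ : u - (ω u / ω a) • a ∈ LinearMap.range φ := hker <| by
    rw [LinearMap.mem_ker, map_sub, map_smul, smul_eq_mul, div_mul_cancel₀ _ hωa, sub_self]
  refine ⟨w, fun v ↦ ?_⟩
  rw [hw, sub_mul, smul_mul_assoc, ha v, smul_zero, sub_zero]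

theorem eq_zero_of_forall_map_mul_eq_zero {ν : ℕ} (hnil : npow N (ν + 1) = ⊥)
    (hann : Module.finrank ℂ (annN N) = 1) (ha : a ∈ annN N) (hωa : ω a ≠ 0)
    (hinj : Function.Injective φ) (hrange : LinearMap.range φ = LinearMap.ker ω) {x : W}
    (h : ∀ y, ω (φ x * φ y) = 0) : x = 0 := by
  refine (map_eq_zero_iff φ hinj).mp (eq_zero_of_map_mul_eq_zero hnil hann ha hωa ?_ fun v ↦ ?_)
  · exact LinearMap.mem_ker.mp (hrange ▸ LinearMap.mem_range_self φ x)
  · obtain ⟨w, hw⟩ := exists_forall_mul_eq ha hωa hrange.ge v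
    rw [mul_comm, ← hw, mul_comm, h]

end Lift

section Uniqueness

variable {W N N' : Type*} [AddCommGroup W] [Module ℂ W] [NonUnitalCommRing N] [Module ℂ N]
  [NonUnitalCommRing N'] [Module ℂ N'] {ω : N →ₗ[ℂ] ℂ} {φ : W →ₗ[ℂ] N} {ω' : N' →ₗ[ℂ] ℂ}
  {φ' : W →ₗ[ℂ] N'}

theorem exists_forall_mul_eq_upow
    (hB : ∀ x y, ω (φ x * φ y) = ω' (φ' x * φ' y))
    (hT : ∀ x y z, ω (φ x * (φ y * φ z)) = ω' (φ' x * (φ' y * φ' z)))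
    (hnd : ∀ x, (∀ y, ω (φ x * φ y) = 0) → x = 0)
    (hlift : ∀ u : N, ∃ w, ∀ v, φ w * v = u * v) (hlift' : ∀ u : N', ∃ w, ∀ v, φ' w * v = u * v)
    (x : W) : ∀ m : ℕ, ∃ w : W,
      (∀ v, φ w * v = upow (φ x) (m + 1) * v) ∧ (∀ v, φ' w * v = upow (φ' x) (m + 1) * v)
  | 0 => ⟨x, fun _ ↦ rfl, fun _ ↦ rfl⟩
  | m + 1 => by
    obtain ⟨w, hw, hw'⟩ := exists_forall_mul_eq_upow hB hT hnd hlift hlift' x m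
    obtain ⟨w₁, hw₁⟩ := hlift (upow (φ x) (m + 2))
    obtain ⟨w₁', hw₁'⟩ := hlift' (upow (φ' x) (m + 2))
    have hB₁ : ∀ z, ω (φ w₁ * φ z) = ω (φ w₁' * φ z) := fun z ↦ calc
      ω (φ w₁ * φ z) = ω (φ x * (φ w * φ z)) := by rw [hw₁, hw, upow_succ_succ, mul_assoc]
      _ = ω' (φ' x * (φ' w * φ' z)) := hT x w z
      _ = ω' (φ' w₁' * φ' z) := by rw [hw₁', hw', upow_succ_succ, mul_assoc]
      _ = ω (φ w₁' * φ z) := (hB w₁' z).symm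
    obtain rfl : w₁ = w₁' := sub_eq_zero.mp <| hnd _ fun z ↦ by
      rw [map_sub, sub_mul, map_sub, hB₁, sub_self]
    exact ⟨w₁, hw₁, hw₁'⟩

theorem map_upow_eq_of_forms_eq
    (hB : ∀ x y, ω (φ x * φ y) = ω' (φ' x * φ' y))
    (hT : ∀ x y z, ω (φ x * (φ y * φ z)) = ω' (φ' x * (φ' y * φ' z)))
    (hnd : ∀ x, (∀ y, ω (φ x * φ y) = 0) → x = 0)
    (hlift : ∀ u : N, ∃ w, ∀ v, φ w * v = u * v) (hlift' : ∀ u : N', ∃ w, ∀ v, φ' w * v = u * v)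
    (x : W) (m : ℕ) : ω (upow (φ x) (m + 2)) = ω' (upow (φ' x) (m + 2)) := by
  obtain ⟨w, hw, hw'⟩ := exists_forall_mul_eq_upow hB hT hnd hlift hlift' x m
  rw [upow_succ_succ, upow_succ_succ, mul_comm, mul_comm (φ' x), ← hw, ← hw', hB]

end Uniqueness

theorem sum_Icc_map_upow_eq_of_le {N : Type*} [NonUnitalCommRing N] [Module ℂ N] {ν M : ℕ}
    (hnil : npow N (ν + 1) = ⊥) (hM : ν ≤ M) (c : ℕ → ℂ) (ω : N →ₗ[ℂ] ℂ) (u : N) :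
    ∑ ℓ ∈ Icc 2 ν, c ℓ * ω (upow u ℓ) = ∑ ℓ ∈ Icc 2 M, c ℓ * ω (upow u ℓ) := by
  refine sum_subset (Icc_subset_Icc_right hM) fun ℓ hℓ hℓν ↦ ?_
  rw [upow_eq_zero_of_lt hnil u (by simp only [mem_Icc] at hℓ hℓν; omega), map_zero, mul_zero]

theorem stmt13_general (W : Type*) [AddCommGroup W] [Module ℂ W]
    (N : Type*) [NonUnitalCommRing N] [Module ℂ N] [IsScalarTower ℂ N N]
    (ν : ℕ) (hnil : npow N (ν + 1) = ⊥) (hann : Module.finrank ℂ (annN N) = 1)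
    (ω : N →ₗ[ℂ] ℂ) (hω : ∃ a ∈ annN N, ω a ≠ 0)
    (φ : W →ₗ[ℂ] N) (hinj : Function.Injective φ)
    (hrange : LinearMap.range φ = LinearMap.ker ω)
    (N' : Type*) [NonUnitalCommRing N'] [Module ℂ N'] [IsScalarTower ℂ N' N']
    (ν' : ℕ) (hnil' : npow N' (ν' + 1) = ⊥)
    (ω' : N' →ₗ[ℂ] ℂ) (hω' : ∃ a ∈ annN N', ω' a ≠ 0)
    (φ' : W →ₗ[ℂ] N') (hrange' : LinearMap.range φ' = LinearMap.ker ω')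
    (h2 : ∀ x : W, ω (upow (φ x) 2) = ω' (upow (φ' x) 2))
    (h3 : ∀ x : W, ω (upow (φ x) 3) = ω' (upow (φ' x) 3)) :
    ∀ x : W,
      ∑ ℓ ∈ Finset.Icc 2 ν, ((Nat.factorial ℓ : ℂ))⁻¹ * ω (upow (φ x) ℓ)
        = ∑ ℓ ∈ Finset.Icc 2 ν', ((Nat.factorial ℓ : ℂ))⁻¹ * ω' (upow (φ' x) ℓ) := by
  obtain ⟨a, ha, hωa⟩ := hω
  obtain ⟨a', ha', hωa'⟩ := hω'
  have hterm := map_upow_eq_of_forms_eq (map_mul_eq_of_map_upow_two_eq h2)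
    (map_mul_mul_eq_of_map_upow_three_eq h3)
    (fun _ ↦ eq_zero_of_forall_map_mul_eq_zero hnil hann ha hωa hinj hrange)
    (exists_forall_mul_eq ha hωa hrange.ge) (exists_forall_mul_eq ha' hωa' hrange'.ge)
  intro x
  rw [sum_Icc_map_upow_eq_of_le hnil (le_max_left ν ν'),
    sum_Icc_map_upow_eq_of_le hnil' (le_max_right ν ν')]
  refine sum_congr rfl fun ℓ hℓ ↦ ?_
  obtain ⟨m, rfl⟩ : ∃ m, ℓ = m + 2 := ⟨ℓ - 2, by simp only [mem_Icc] at hℓ; omega⟩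
  rw [hterm x m]

/-- A nil-polynomial is uniquely determined by its quadratic and cubic
terms: if `P = ω ∘ exp₂ ∘ φ` and `P̃ = ω̃ ∘ exp₂ ∘ φ̃` are nil-polynomials on the same
space `W` (arising from possibly different admissible algebras) with `P^{[2]} = P̃^{[2]}`
and `P^{[3]} = P̃^{[3]}`, then `P = P̃`. Here `P(x) = Σ_{ℓ=2}^{ν} ω(φ(x)^ℓ)/ℓ!`. -/
theorem stmt13 (W : Type*) [AddCommGroup W] [Module ℂ W] [FiniteDimensional ℂ W]
    (N : Type*) [NonUnitalCommRing N] [Module ℂ N] [SMulCommClass ℂ N N]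
    [IsScalarTower ℂ N N] [FiniteDimensional ℂ N]
    (ν : ℕ) (hnil : npow N (ν + 1) = ⊥) (hann : Module.finrank ℂ (annN N) = 1)
    (ω : N →ₗ[ℂ] ℂ) (hω : ∃ a ∈ annN N, ω a ≠ 0)
    (φ : W →ₗ[ℂ] N) (hinj : Function.Injective φ)
    (hrange : LinearMap.range φ = LinearMap.ker ω)
    (N' : Type*) [NonUnitalCommRing N'] [Module ℂ N'] [SMulCommClass ℂ N' N']
    [IsScalarTower ℂ N' N'] [FiniteDimensional ℂ N']
    (ν' : ℕ) (hnil' : npow N' (ν' + 1) = ⊥) (hann' : Module.finrank ℂ (annN N') = 1)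
    (ω' : N' →ₗ[ℂ] ℂ) (hω' : ∃ a ∈ annN N', ω' a ≠ 0)
    (φ' : W →ₗ[ℂ] N') (hinj' : Function.Injective φ')
    (hrange' : LinearMap.range φ' = LinearMap.ker ω')
    (h2 : ∀ x : W, ω (upow (φ x) 2) = ω' (upow (φ' x) 2))
    (h3 : ∀ x : W, ω (upow (φ x) 3) = ω' (upow (φ' x) 3)) :
    ∀ x : W,
      ∑ ℓ ∈ Finset.Icc 2 ν, ((Nat.factorial ℓ : ℂ))⁻¹ * ω (upow (φ x) ℓ)
        = ∑ ℓ ∈ Finset.Icc 2 ν', ((Nat.factorial ℓ : ℂ))⁻¹ * ω' (upow (φ' x) ℓ) :=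
  stmt13_general W N ν hnil hann ω hω φ hinj hrange N' ν' hnil' ω' hω' φ' hrange' h2 h3
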